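/- Let p ≥ 1, let L : ℝ^p → ℝ be convex and differentiable, let β* ∈ ℝ^p with support S = {i : β*_i ≠ 0}, suppose L satisfies the RSC condition at β* over C_S with parameter κ > 0, and let λ > 0 satisfy λ ≥ 2‖∇L(β*)‖_∞. If β̂ is a global minimizer of β ↦ L(β) + λ‖β‖₁ over ℝ^p, then ‖β̂ − β*‖₂² ≤ ((λ + ‖∇L(β*)‖_∞) / κ) · ‖β̂ − β*‖₁. -/

import Mathlib

open RealInnerProductSpace

/-- The ℓ1-norm on `ℝ^p`. -/
noncomputable def norm1 {p : ℕ} (ξ : EuclideanSpace ℝ (Fin p)) : ℝ := ∑ i, |ξ i|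

/-- The sup-norm (ℓ∞-norm) on `ℝ^p`. -/
noncomputable def normInf {p : ℕ} (ξ : EuclideanSpace ℝ (Fin p)) : ℝ := ⨆ i, |ξ i|

open Classical in
/-- `restrict S ξ` agrees with `ξ` on coordinates in `S` and is zero outside `S`. -/
noncomputable def restrict {p : ℕ} (S : Set (Fin p)) (ξ : EuclideanSpace ℝ (Fin p)) :
    EuclideanSpace ℝ (Fin p) := WithLp.toLp 2 (fun i => if i ∈ S then ξ i else 0)


/-- `f` satisfies the restricted strong convexity (RSC) condition at `βstar` over the
restricted cone `C_S` with parameter `κ`. -/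
def RSC {p : ℕ} (f : EuclideanSpace ℝ (Fin p) → ℝ) (βstar : EuclideanSpace ℝ (Fin p))
    (S : Set (Fin p)) (κ : ℝ) : Prop :=
  ∀ Δ : EuclideanSpace ℝ (Fin p), norm1 (restrict Sᶜ Δ) ≤ 3 * norm1 (restrict S Δ) →
    κ * ‖Δ‖ ^ 2 ≤ f (βstar + Δ) - f βstar - ⟪Δ, gradient f βstar⟫

-- auxiliary: convexity first-order condition
lemma convex_grad_aux {p : ℕ} (L : EuclideanSpace ℝ (Fin p) → ℝ)
    (hLconv : ConvexOn ℝ Set.univ L) (hLdiff : Differentiable ℝ L)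
    (x y : EuclideanSpace ℝ (Fin p)) :
    L x + ⟪gradient L x, y - x⟫ ≤ L y := by
  set d := y - x with hd
  set g : ℝ → ℝ := fun t => L (x + t • d) with hg
  have hgc : ConvexOn ℝ Set.univ g := by
    have := hLconv.comp_affineMap (AffineMap.lineMap x y)
    have he : (AffineMap.lineMap x y : ℝ →ᵃ[ℝ] EuclideanSpace ℝ (Fin p)) ⁻¹' Set.univ
        = Set.univ := by simp
    rw [he] at this
    have hfun : g = L ∘ ⇑(AffineMap.lineMap x y) := by
      funext t
      simp [hg, AffineMap.lineMap_apply, hd]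
      rw [add_comm]
    rw [hfun]; exact this
  have hfd : HasFDerivAt L (InnerProductSpace.toDual ℝ _ (gradient L x)) x :=
    hasGradientAt_iff_hasFDerivAt.mp (hLdiff x).hasGradientAt
  have hinner : HasDerivAt (fun t : ℝ => x + t • d) d 0 := by
    have h1 : HasDerivAt (fun t : ℝ => t • d) ((1:ℝ) • d) 0 :=
      (hasDerivAt_id 0).smul_const d
    simpa using h1.const_add x
  have hgd : HasDerivAt g (⟪gradient L x, d⟫) 0 := by
    have h0 : x = x + (0:ℝ) • d := by simp
    rw [h0] at hfd
    have := hfd.comp_hasDerivAt (x := (0:ℝ)) hinner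
    simp only [InnerProductSpace.toDual_apply_apply, zero_smul, add_zero] at this
    exact this
  have hslope := hgc.le_slope_of_hasDerivAt (x := (0:ℝ)) (y := 1)
    (Set.mem_univ _) (Set.mem_univ _) one_pos hgd
  have hs : slope g 0 1 = g 1 - g 0 := by simp [slope]
  rw [hs] at hslope
  have hg1 : g 1 = L y := by simp [hg, hd]
  have hg0 : g 0 = L x := by simp [hg]
  rw [hg1, hg0] at hslope
  linarith

lemma inner_abs_le {p : ℕ} (hp : 1 ≤ p) (Δ g : EuclideanSpace ℝ (Fin p)) :
    |⟪Δ, g⟫| ≤ normInf g * norm1 Δ := by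
  haveI : Nonempty (Fin p) := ⟨⟨0, hp⟩⟩
  have hM : ∀ i, |g i| ≤ normInf g := fun i =>
    le_ciSup (f := fun j => |g j|) (Set.Finite.bddAbove (Set.finite_range _)) i
  have h1 : ⟪Δ, g⟫ = ∑ i, Δ i * g i := by
    simp [PiLp.inner_apply, RCLike.inner_apply, mul_comm]
  rw [h1]
  calc |∑ i, Δ i * g i| ≤ ∑ i, |Δ i * g i| := Finset.abs_sum_le_sum_abs _ _
    _ ≤ ∑ i, |Δ i| * normInf g := by
        apply Finset.sum_le_sum
        intro i _
        rw [abs_mul]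
        exact mul_le_mul_of_nonneg_left (hM i) (abs_nonneg _)
    _ = normInf g * norm1 Δ := by rw [norm1, Finset.mul_sum]; simp [mul_comm]

lemma normInf_nonneg {p : ℕ} (hp : 1 ≤ p) (g : EuclideanSpace ℝ (Fin p)) :
    0 ≤ normInf g := by
  haveI : Nonempty (Fin p) := ⟨⟨0, hp⟩⟩
  exact le_trans (abs_nonneg (g ⟨0, hp⟩))
    (le_ciSup (f := fun j => |g j|) (Set.Finite.bddAbove (Set.finite_range _)) ⟨0, hp⟩)

lemma norm1_nonneg {p : ℕ} (ξ : EuclideanSpace ℝ (Fin p)) : 0 ≤ norm1 ξ :=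
  Finset.sum_nonneg fun i _ => abs_nonneg _

lemma norm1_split {p : ℕ} (S : Set (Fin p)) (ξ : EuclideanSpace ℝ (Fin p)) :
    norm1 (restrict S ξ) + norm1 (restrict Sᶜ ξ) = norm1 ξ := by
  classical
  rw [norm1, norm1, norm1, ← Finset.sum_add_distrib]
  apply Finset.sum_congr rfl
  intro i _
  by_cases h : i ∈ S <;> simp [restrict, h]

theorem stmt_4 {p : ℕ} (hp : 1 ≤ p)
    (L : EuclideanSpace ℝ (Fin p) → ℝ)
    (hLconv : ConvexOn ℝ Set.univ L) (hLdiff : Differentiable ℝ L)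
    (βstar : EuclideanSpace ℝ (Fin p))
    (S : Set (Fin p)) (hS : S = {i | βstar i ≠ 0})
    (κ : ℝ) (hκ : 0 < κ) (hRSC : RSC L βstar S κ)
    (lam : ℝ) (hlam : 0 < lam)
    (hlam2 : 2 * normInf (gradient L βstar) ≤ lam)
    (βhat : EuclideanSpace ℝ (Fin p))
    (hmin : ∀ β, L βhat + lam * norm1 βhat ≤ L β + lam * norm1 β) :
    ‖βhat - βstar‖ ^ 2 ≤
      ((lam + normInf (gradient L βstar)) / κ) * norm1 (βhat - βstar) := by
  classical
  set Δ : EuclideanSpace ℝ (Fin p) := βhat - βstar with hΔ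
  set M : ℝ := normInf (gradient L βstar) with hMdef
  set a : ℝ := norm1 (restrict S Δ) with ha
  set b : ℝ := norm1 (restrict Sᶜ Δ) with hb
  have hM0 : 0 ≤ M := normInf_nonneg hp _
  have ha0 : 0 ≤ a := norm1_nonneg _
  have hb0 : 0 ≤ b := norm1_nonneg _
  have hsplit : a + b = norm1 Δ := norm1_split S Δ
  -- support inequality : norm1 βstar - norm1 βhat ≤ a - b
  have hsupp : norm1 βstar - norm1 βhat ≤ a - b := by
    have : norm1 βstar - norm1 βhat =
        ∑ i, (|βstar i| - |βhat i|) := by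
      rw [norm1, norm1, Finset.sum_sub_distrib]
    rw [this, ha, hb, norm1, norm1, ← Finset.sum_sub_distrib]
    apply Finset.sum_le_sum
    intro i _
    by_cases h : i ∈ S
    · have hΔi : Δ i = βhat i - βstar i := by simp [hΔ]
      simp only [restrict, h, if_pos, Set.mem_compl_iff, not_true]
      simp [h]
      have := abs_sub_abs_le_abs_sub (βstar i) (βhat i)
      rw [hΔi]
      rw [abs_sub_comm] at this
      linarith
    · have hβi : βstar i = 0 := by
        by_contra hne
        exact h (hS ▸ hne)
      have hΔi : Δ i = βhat i := by simp [hΔ, hβi]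
      simp only [restrict, h, if_neg, Set.mem_compl_iff]
      simp [h, hβi, hΔi]
  -- basic inequality
  have hbasic : L βhat - L βstar ≤ lam * (a - b) := by
    have := hmin βstar
    nlinarith [hsupp]
  -- convexity lower bound
  have hconv : L βstar + ⟪gradient L βstar, Δ⟫ ≤ L βhat := by
    have := convex_grad_aux L hLconv hLdiff βstar βhat
    simpa [hΔ] using this
  have hinn : |⟪Δ, gradient L βstar⟫| ≤ M * (a + b) := by
    rw [hsplit]
    exact inner_abs_le hp Δ _
  have hsym : ⟪gradient L βstar, Δ⟫ = ⟪Δ, gradient L βstar⟫ := real_inner_comm _ _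
  have habs1 : -(M * (a + b)) ≤ ⟪Δ, gradient L βstar⟫ := neg_le_of_abs_le hinn
  have habs2 : ⟪Δ, gradient L βstar⟫ ≤ M * (a + b) := le_of_abs_le hinn
  -- cone condition
  have hcone : b ≤ 3 * a := by
    have h1 : -(M * (a + b)) ≤ lam * (a - b) := by
      rw [hsym] at hconv; linarith
    nlinarith
  -- apply RSC
  have hrsc := hRSC Δ (by rw [← ha, ← hb] at *; linarith)
  have hΔeq : βstar + Δ = βhat := by simp [hΔ]
  rw [hΔeq] at hrsc
  have hkey : κ * ‖Δ‖ ^ 2 ≤ (lam + M) * (a + b) := by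
    calc κ * ‖Δ‖ ^ 2 ≤ L βhat - L βstar - ⟪Δ, gradient L βstar⟫ := hrsc
      _ ≤ lam * (a - b) + M * (a + b) := by linarith
      _ ≤ (lam + M) * (a + b) := by nlinarith
  rw [hsplit] at hkey
  rw [div_mul_eq_mul_div, le_div_iff₀ hκ]
  calc ‖Δ‖ ^ 2 * κ = κ * ‖Δ‖ ^ 2 := by ring
    _ ≤ (lam + M) * norm1 Δ := hkey
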